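/- Let G be a bipartite finite simple graph, let 𝐞 = {e_1,…,e_r} be a path ordered matching of G, and suppose G has a leaf y (an edge one of whose endpoints has degree one in G). Then: (1) if y ∉ 𝐞, the set 𝐞 is a path ordered matching of the graph G∖y; and (2) if y ∈ 𝐞, then y = e_1 or y = e_r, and 𝐞∖{y} is a path ordered matching of G∖y. -/
import Mathlib


/-!
STATEMENT 11: Let `G` be a bipartite graph, let `𝐞 = {e_1,…,e_r}` (here `r ≥ 1`) be a path
ordered matching of `G`, and suppose `G` has a leaf `y`. Then: (1) if `y ∉ 𝐞`, then `𝐞` is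
a path ordered matching of `G∖y`; and (2) if `y ∈ 𝐞`, then `y = e_1` or `y = e_r`, and
`𝐞∖{y}` is a path ordered matching of `G∖y`.
-/

/-- `e : Fin r → Sym2 V` lists a path ordered matching `{e_1, …, e_r}` of `G`: all the
`e i` are edges of `G`, and the vertices of `G` can be relabelled — via `2r` distinct
vertices `w (inl 0), …, w (inl (r-1)), w (inr 0), …, w (inr (r-1))` (0-indexed versions of
the labels `1, …, 2r`, with `inl i` playing the role of the label `i+1` and `inr j` the
role of the label `j+1+r`) — so that `e_i = {i, i+r}`, the edges `f_i = {i, i+r+1}` belong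
to `G` for `1 ≤ i ≤ r−1`, and whenever `{i, j+r} ∈ E(G)` with `1 ≤ i, j ≤ r` one has
`i ≤ j`. -/
def IsPathOrderedMatching {V : Type*} (G : SimpleGraph V) {r : ℕ}
    (e : Fin r → Sym2 V) : Prop :=
  (∀ i, e i ∈ G.edgeSet) ∧
  ∃ w : (Fin r ⊕ Fin r) ↪ V,
    (∀ i : Fin r, e i = s(w (Sum.inl i), w (Sum.inr i))) ∧
    (∀ i j : Fin r, (j : ℕ) = (i : ℕ) + 1 →
      s(w (Sum.inl i), w (Sum.inr j)) ∈ G.edgeSet) ∧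
    (∀ i j : Fin r, s(w (Sum.inl i), w (Sum.inr j)) ∈ G.edgeSet → (i : ℕ) ≤ (j : ℕ))

/-- A graph is bipartite if its vertices can be split into two parts such that every edge
has one endpoint in each part. -/
def IsBipartite {V : Type*} (G : SimpleGraph V) : Prop :=
  ∃ c : V → Bool, ∀ v w, G.Adj v w → c v ≠ c w

private lemma two_le_degree_aux {V : Type*} [Fintype V] [DecidableEq V]
    (G : SimpleGraph V) [DecidableRel G.Adj] {v a b : V}
    (ha : G.Adj v a) (hb : G.Adj v b) (hab : a ≠ b) : 2 ≤ G.degree v := by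
  have h : ({a, b} : Finset V) ⊆ G.neighborFinset v := by
    intro x hx
    simp only [Finset.mem_insert, Finset.mem_singleton] at hx
    rcases hx with rfl | rfl <;> simp [ha, hb]
  calc 2 = ({a, b} : Finset V).card := (Finset.card_pair hab).symm
    _ ≤ (G.neighborFinset v).card := Finset.card_le_card h
    _ = G.degree v := rfl

theorem pathOrderedMatching_deleteLeaf {V : Type*} [Fintype V] [DecidableEq V]
    (G : SimpleGraph V) [DecidableRel G.Adj] (hG : IsBipartite G)
    (r : ℕ) (e : Fin (r + 1) → Sym2 V) (hpom : IsPathOrderedMatching G e)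
    (y : Sym2 V) (hy : y ∈ G.edgeSet) (hleaf : ∃ v ∈ y, G.degree v = 1) :
    ((∀ i, e i ≠ y) → IsPathOrderedMatching (G.deleteEdges {y}) e) ∧
    ((∃ i, e i = y) →
      (y = e 0 ∨ y = e (Fin.last r)) ∧
      (y = e 0 →
        IsPathOrderedMatching (G.deleteEdges {y}) (fun i : Fin r => e i.succ)) ∧
      (y = e (Fin.last r) →
        IsPathOrderedMatching (G.deleteEdges {y}) (fun i : Fin r => e i.castSucc))) := by
  obtain ⟨he, w, hw, hf, hord⟩ := hpom
  obtain ⟨v, hv, hdeg⟩ := hleaf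
  have winj := w.injective
  have hedel : ∀ s : Sym2 V, s ∈ G.edgeSet → s ≠ y → s ∈ (G.deleteEdges {y}).edgeSet := by
    intro s hs hne
    rw [SimpleGraph.edgeSet_deleteEdges]
    exact ⟨hs, hne⟩
  have hsub : ∀ s : Sym2 V, s ∈ (G.deleteEdges {y}).edgeSet → s ∈ G.edgeSet := by
    intro s hs; rw [SimpleGraph.edgeSet_deleteEdges] at hs; exact hs.1
  have adj_e : ∀ i : Fin (r+1), G.Adj (w (Sum.inl i)) (w (Sum.inr i)) := by
    intro i
    have := he i
    rw [hw i, SimpleGraph.mem_edgeSet] at this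
    exact this
  have adj_f : ∀ i j : Fin (r+1), (j : ℕ) = (i : ℕ) + 1 →
      G.Adj (w (Sum.inl i)) (w (Sum.inr j)) := by
    intro i j hij
    have := hf i j hij
    rw [SimpleGraph.mem_edgeSet] at this
    exact this
  -- f-edges are never equal to the leaf y
  have hfney : ∀ i j : Fin (r+1), (j : ℕ) = (i : ℕ) + 1 →
      s(w (Sum.inl i), w (Sum.inr j)) ≠ y := by
    intro i j hij hfy
    have hv' := hv
    rw [← hfy] at hv'
    have hij' : i ≠ j := by
      intro h; rw [h] at hij; omega
    rcases Sym2.mem_iff.mp hv' with h | h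
    · -- v = w (inl i), adjacent to both w (inr i) and w (inr j)
      subst h
      have hne : w (Sum.inr i) ≠ w (Sum.inr j) := by
        intro h; exact hij' (Sum.inr.inj (winj h))
      have := two_le_degree_aux G (adj_e i) (adj_f i j hij) hne
      omega
    · -- v = w (inr j), adjacent to both w (inl j) and w (inl i)
      subst h
      have hne : w (Sum.inl j) ≠ w (Sum.inl i) := by
        intro h; exact hij' (Sum.inl.inj (winj h)).symm
      have := two_le_degree_aux G (adj_e j).symm (adj_f i j hij).symm hne
      omega
  -- e is injective
  have hne_e : ∀ i j : Fin (r+1), i ≠ j → e i ≠ e j := by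
    intro i j hij h
    rw [hw i, hw j] at h
    rcases Sym2.eq_iff.mp h with ⟨h1, _⟩ | ⟨h1, _⟩
    · exact hij (Sum.inl.inj (winj h1))
    · exact Sum.inl_ne_inr (winj h1)
  constructor
  · -- part 1
    intro hney
    refine ⟨fun i => hedel _ (he i) (hney i), w, hw, ?_, ?_⟩
    · intro i j hij
      exact hedel _ (hf i j hij) (hfney i j hij)
    · intro i j hs
      exact hord i j (hsub _ hs)
  · rintro ⟨k, hk⟩
    have hky : y = s(w (Sum.inl k), w (Sum.inr k)) := by rw [← hk, hw k]
    have hmain : y = e 0 ∨ y = e (Fin.last r) := by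
      have hv' := hv
      rw [hky] at hv'
      rcases Sym2.mem_iff.mp hv' with h | h
      · -- v = w (inl k) : k must be last
        right
        have hkl : k = Fin.last r := by
          by_contra hne
          have hlt : (k : ℕ) < r := Fin.val_lt_last hne
          set j : Fin (r+1) := ⟨(k : ℕ) + 1, by omega⟩ with hjdef
          have hij : (j : ℕ) = (k : ℕ) + 1 := rfl
          have hnekj : w (Sum.inr k) ≠ w (Sum.inr j) := by
            intro hh
            have := Sum.inr.inj (winj hh)
            rw [Fin.ext_iff] at this
            simp [hjdef] at this
          subst h
          have := two_le_degree_aux G (adj_e k) (adj_f k j hij) hnekj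
          omega
        rw [← hk, hkl]
      · -- v = w (inr k) : k must be 0
        left
        have hk0 : k = 0 := by
          by_contra hne
          have hpos : 0 < (k : ℕ) := Fin.pos_of_ne_zero hne
          set i : Fin (r+1) := ⟨(k : ℕ) - 1, by omega⟩ with hidef
          have hij : (k : ℕ) = (i : ℕ) + 1 := by simp [hidef]; omega
          have hneik : w (Sum.inl k) ≠ w (Sum.inl i) := by
            intro hh
            have := Sum.inl.inj (winj hh)
            rw [Fin.ext_iff] at this
            simp [hidef] at this
            omega
          subst h
          have := two_le_degree_aux G (adj_e k).symm (adj_f i k hij).symm hneik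
          omega
        rw [← hk, hk0]
    refine ⟨hmain, ?_, ?_⟩
    · -- y = e 0 : drop the first edge
      intro hy0
      refine ⟨?_, (Function.Embedding.sumMap ⟨Fin.succ, Fin.succ_injective r⟩
        ⟨Fin.succ, Fin.succ_injective r⟩).trans w, ?_, ?_, ?_⟩
      · intro i
        refine hedel _ (he i.succ) ?_
        rw [hy0]
        exact hne_e i.succ 0 (Fin.succ_ne_zero i)
      · intro i
        exact hw i.succ
      · intro i j hij
        have hij' : ((j.succ : Fin (r+1)) : ℕ) = ((i.succ : Fin (r+1)) : ℕ) + 1 := by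
          simp [Fin.val_succ]; omega
        exact hedel _ (hf i.succ j.succ hij') (hfney i.succ j.succ hij')
      · intro i j hs
        have := hord i.succ j.succ (hsub _ hs)
        simp [Fin.val_succ] at this
        omega
    · -- y = e last : drop the last edge
      intro hyl
      refine ⟨?_, (Function.Embedding.sumMap ⟨Fin.castSucc, Fin.castSucc_injective r⟩
        ⟨Fin.castSucc, Fin.castSucc_injective r⟩).trans w, ?_, ?_, ?_⟩
      · intro i
        refine hedel _ (he i.castSucc) ?_
        rw [hyl]
        exact hne_e i.castSucc (Fin.last r) (Fin.castSucc_lt_last i).ne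
      · intro i
        exact hw i.castSucc
      · intro i j hij
        have hij' : ((j.castSucc : Fin (r+1)) : ℕ) = ((i.castSucc : Fin (r+1)) : ℕ) + 1 := by
          simpa using hij
        exact hedel _ (hf i.castSucc j.castSucc hij') (hfney i.castSucc j.castSucc hij')
      · intro i j hs
        have := hord i.castSucc j.castSucc (hsub _ hs)
        simpa using this
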